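/- Let n ∈ ℝ with n ≠ 0 and n ≠ −1, let c₁, c₂ ∈ ℝ, and let φ : J → (0,∞) be differentiable on an open interval J ⊆ ℝ with φ(ω)ⁿ ≠ 1 for all ω ∈ J and satisfying the implicit relation φ(ω)^{n+1}/(n+1) − φ(ω) = c₁ω + c₂ for all ω ∈ J. Then φ'(ω)·(φ(ω)ⁿ − 1) = c₁ on J; moreover φ is twice differentiable and satisfies the reduced ODE (25) on J with r = 0 and p = 0. -/

import Mathlib

open Real Set

noncomputable section

/-- The reduced ODE (25):
`[(4r² − p)n² + 4(2n+1)r²]φ^{n+1} + 4n(n+1)[nφ'' − 2(n+1)rφ']φⁿ + 4n³(n+1)(φ')²φ^{n−1}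
 − 4n²(n+1)φ'' = 0`, for a positive function `φ` with first and second derivatives
`φ'`, `φ''`. -/
def ODE25 (n r p : ℝ) (φ φ' φ'' : ℝ → ℝ) (ω : ℝ) : Prop :=
  ((4 * r ^ 2 - p) * n ^ 2 + 4 * (2 * n + 1) * r ^ 2) * φ ω ^ (n + 1)
    + 4 * n * (n + 1) * (n * φ'' ω - 2 * (n + 1) * r * φ' ω) * φ ω ^ n
    + 4 * n ^ 3 * (n + 1) * (φ' ω) ^ 2 * φ ω ^ (n - 1)
    - 4 * n ^ 2 * (n + 1) * φ'' ω = 0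

/-!
Differentiating the implicit relation `φ^{n+1}/(n+1) − φ = c₁ω + c₂` gives `φ'(φⁿ − 1) = c₁`.
Since `φⁿ ≠ 1`, this expresses `φ' = c₁/(φⁿ − 1)` as a differentiable function, and
differentiating the locally constant `φ'(φⁿ − 1)` once more gives
`φ''(φⁿ − 1) + nφ^{n−1}φ'² = 0`. For `r = p = 0` the left side of (25) is
`4n²(n+1)` times this expression.
-/

theorem HasDerivAt.rpow_add_one_div_sub_self {φ : ℝ → ℝ} {d x n : ℝ}
    (hφ : HasDerivAt φ d x) (hpos : 0 < φ x) (hn : n + 1 ≠ 0) :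
    HasDerivAt (fun y => φ y ^ (n + 1) / (n + 1) - φ y) (d * (φ x ^ n - 1)) x := by
  refine (((hφ.rpow_const (Or.inl hpos.ne')).div_const (n + 1)).sub hφ).congr_deriv ?_
  rw [add_sub_cancel_right]
  field_simp

theorem HasDerivAt.mul_rpow_sub_one {φ ψ : ℝ → ℝ} {d e x n : ℝ}
    (hψ : HasDerivAt ψ e x) (hφ : HasDerivAt φ d x) (hpos : 0 < φ x) :
    HasDerivAt (fun y => ψ y * (φ y ^ n - 1))
      (e * (φ x ^ n - 1) + ψ x * (d * n * φ x ^ (n - 1))) x :=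
  hψ.mul ((hφ.rpow_const (Or.inl hpos.ne')).sub_const 1)

section ImplicitSolution

variable {n : ℝ} {J : Set ℝ} {φ φ' : ℝ → ℝ}

theorem mul_rpow_sub_one_eq_of_implicit_relation {c₁ c₂ : ℝ} (hn : n + 1 ≠ 0) (hJ : IsOpen J)
    (hpos : ∀ ω ∈ J, 0 < φ ω) (hd : ∀ ω ∈ J, HasDerivAt φ (φ' ω) ω)
    (hrel : ∀ ω ∈ J, φ ω ^ (n + 1) / (n + 1) - φ ω = c₁ * ω + c₂) :
    ∀ ω ∈ J, φ' ω * (φ ω ^ n - 1) = c₁ := by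
  intro ω hω
  have haffine : HasDerivAt (fun y => c₁ * y + c₂) c₁ ω := by
    simpa using ((hasDerivAt_id ω).const_mul c₁).add_const c₂
  exact ((hd ω hω).rpow_add_one_div_sub_self (hpos ω hω) hn).unique <|
    haffine.congr_of_eventuallyEq (Filter.eventually_of_mem (hJ.mem_nhds hω) hrel)

variable {c : ℝ} (hJ : IsOpen J) (hpos : ∀ ω ∈ J, 0 < φ ω)
  (hd : ∀ ω ∈ J, HasDerivAt φ (φ' ω) ω) (hfirst : ∀ ω ∈ J, φ' ω * (φ ω ^ n - 1) = c)
include hJ hpos hd hfirst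

theorem differentiableAt_of_mul_rpow_sub_one_eq (hne : ∀ ω ∈ J, φ ω ^ n ≠ 1) :
    ∀ ω ∈ J, DifferentiableAt ℝ φ' ω := by
  intro ω hω
  have hquot : φ' =ᶠ[nhds ω] fun y => c / (φ y ^ n - 1) := by
    filter_upwards [hJ.mem_nhds hω] with y hy
    rw [eq_div_iff (sub_ne_zero.2 (hne y hy)), hfirst y hy]
  refine DifferentiableAt.congr_of_eventuallyEq ?_ hquot
  exact (differentiableAt_const c).div
    (((hd ω hω).differentiableAt.rpow_const (Or.inl (hpos ω hω).ne')).sub_const 1)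
    (sub_ne_zero.2 (hne ω hω))

theorem second_deriv_identity_of_mul_rpow_sub_one_eq {φ'' : ℝ → ℝ} {ω : ℝ} (hω : ω ∈ J)
    (hd2 : HasDerivAt φ' (φ'' ω) ω) :
    φ'' ω * (φ ω ^ n - 1) + φ' ω * (φ' ω * n * φ ω ^ (n - 1)) = 0 :=
  (hd2.mul_rpow_sub_one (hd ω hω) (hpos ω hω)).unique <|
    (hasDerivAt_const ω c).congr_of_eventuallyEq
      (Filter.eventually_of_mem (hJ.mem_nhds hω) hfirst)

end ImplicitSolution

theorem ODE25_zero_zero_of {n : ℝ} {φ φ' φ'' : ℝ → ℝ} {ω : ℝ}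
    (h : φ'' ω * (φ ω ^ n - 1) + φ' ω * (φ' ω * n * φ ω ^ (n - 1)) = 0) :
    ODE25 n 0 0 φ φ' φ'' ω := by
  unfold ODE25
  linear_combination 4 * n ^ 2 * (n + 1) * h

theorem implicit_solution_r_zero_general
    (n : ℝ) (hn1 : n ≠ -1) (c₁ c₂ : ℝ)
    (J : Set ℝ) (hJ : IsOpen J)
    (φ φ' : ℝ → ℝ) (hφpos : ∀ ω ∈ J, 0 < φ ω)
    (hd1 : ∀ ω ∈ J, HasDerivAt φ (φ' ω) ω)
    (hne : ∀ ω ∈ J, φ ω ^ n ≠ 1)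
    (hrel : ∀ ω ∈ J, φ ω ^ (n + 1) / (n + 1) - φ ω = c₁ * ω + c₂) :
    (∀ ω ∈ J, φ' ω * (φ ω ^ n - 1) = c₁)
    ∧ ∃ φ'' : ℝ → ℝ, (∀ ω ∈ J, HasDerivAt φ' (φ'' ω) ω)
        ∧ ∀ ω ∈ J, ODE25 n 0 0 φ φ' φ'' ω := by
  have hfirst : ∀ ω ∈ J, φ' ω * (φ ω ^ n - 1) = c₁ :=
    mul_rpow_sub_one_eq_of_implicit_relation (fun h => hn1 (eq_neg_of_add_eq_zero_left h))
      hJ hφpos hd1 hrel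
  have hd2 : ∀ ω ∈ J, HasDerivAt φ' (deriv φ' ω) ω := fun ω hω =>
    (differentiableAt_of_mul_rpow_sub_one_eq hJ hφpos hd1 hfirst hne ω hω).hasDerivAt
  exact ⟨hfirst, deriv φ', hd2, fun ω hω =>
    ODE25_zero_zero_of (second_deriv_identity_of_mul_rpow_sub_one_eq hJ hφpos hd1 hfirst hω
      (hd2 ω hω))⟩

/-- formula (29). If `φ^{n+1}/(n+1) − φ = c₁ω + c₂` with `φⁿ ≠ 1`, then
`φ'(φⁿ − 1) = c₁`, and `φ` is twice differentiable and satisfies the reduced ODE (25)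
with `r = 0` and `p = 0`. -/
theorem implicit_solution_r_zero
    (n : ℝ) (hn : n ≠ 0) (hn1 : n ≠ -1) (c₁ c₂ : ℝ)
    (J : Set ℝ) (hJ : IsOpen J) (hJc : J.OrdConnected)
    (φ φ' : ℝ → ℝ) (hφpos : ∀ ω ∈ J, 0 < φ ω)
    (hd1 : ∀ ω ∈ J, HasDerivAt φ (φ' ω) ω)
    (hne : ∀ ω ∈ J, φ ω ^ n ≠ 1)
    (hrel : ∀ ω ∈ J, φ ω ^ (n + 1) / (n + 1) - φ ω = c₁ * ω + c₂) :
    (∀ ω ∈ J, φ' ω * (φ ω ^ n - 1) = c₁)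
    ∧ ∃ φ'' : ℝ → ℝ, (∀ ω ∈ J, HasDerivAt φ' (φ'' ω) ω)
        ∧ ∀ ω ∈ J, ODE25 n 0 0 φ φ' φ'' ω :=
  implicit_solution_r_zero_general n hn1 c₁ c₂ J hJ φ φ' hφpos hd1 hne hrel

end
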